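/- Let a < b be real numbers, let g : [a,b] → (0,∞) be a log-convex function with g(a) = g(b), and let μ be the Lebesgue measure on ℝ. Then the Sugeno integral satisfies (s)∫_{[a,b]} g dμ ≤ min(g(a), b − a). -/

import Mathlib

open MeasureTheory ENNReal Set

/-
A log-convex function lies below the weighted geometric mean of its endpoint values, hence (by
weighted AM-GM) below their maximum; with equal endpoint values, `g ≤ g a` on `[a, b]`. The Sugeno
integral of a function bounded by `c` on `A` is at most `min c (μ A)`, and `μ [a, b] = b - a`.
-/

/-- The Sugeno (fuzzy) integral of `f` on `A` with respect to `μ`: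
`(s)∫_A f dμ = ⨆ α, min (α, μ (A ∩ {x | f x ≥ α}))`. -/
noncomputable def sugenoIntegral {X : Type*} [MeasurableSpace X] (μ : Measure X)
    (A : Set X) (f : X → ℝ≥0∞) : ℝ≥0∞ :=
  ⨆ α : ℝ≥0∞, min α (μ (A ∩ {x | α ≤ f x}))

theorem sugenoIntegral_le_measure {X : Type*} [MeasurableSpace X] (μ : Measure X) (A : Set X)
    (f : X → ℝ≥0∞) : sugenoIntegral μ A f ≤ μ A :=
  iSup_le fun _ => (min_le_right _ _).trans (measure_mono inter_subset_left)

theorem sugenoIntegral_le_of_forall_le {X : Type*} [MeasurableSpace X] (μ : Measure X)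
    (A : Set X) (f : X → ℝ≥0∞) {c : ℝ≥0∞} (hf : ∀ x ∈ A, f x ≤ c) :
    sugenoIntegral μ A f ≤ c := by
  refine iSup_le fun α => ?_
  by_cases hα : α ≤ c
  · exact (min_le_left _ _).trans hα
  · have hempty : A ∩ {x | α ≤ f x} = ∅ :=
      eq_empty_of_forall_notMem fun x ⟨hx, hαx⟩ => hα (hαx.trans (hf x hx))
    simp [hempty]

theorem le_max_of_le_rpow_mul_rpow {a b x : ℝ} {g : ℝ → ℝ} (ha : 0 ≤ g a) (hb : 0 ≤ g b)
    (hg : ∀ t ∈ Icc (0 : ℝ) 1, g (t * a + (1 - t) * b) ≤ g a ^ t * g b ^ (1 - t))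
    (hx : x ∈ Icc a b) : g x ≤ max (g a) (g b) := by
  rw [← segment_eq_Icc (hx.1.trans hx.2)] at hx
  obtain ⟨t, s, ht, hs, hts, rfl⟩ := hx
  obtain rfl : s = 1 - t := by linarith
  calc g (t • a + (1 - t) • b)
      ≤ g a ^ t * g b ^ (1 - t) := hg t ⟨ht, by linarith⟩
    _ ≤ t * g a + (1 - t) * g b := Real.geom_mean_le_arith_mean2_weighted ht hs ha hb hts
    _ ≤ t * max (g a) (g b) + (1 - t) * max (g a) (g b) := by
        gcongr
        exacts [le_max_left _ _, le_max_right _ _]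
    _ = max (g a) (g b) := by ring

theorem sugenoIntegral_le_of_logConvex_eq_Icc_general (a b : ℝ) (g : ℝ → ℝ)
    (hg_pos : ∀ x ∈ Icc a b, 0 < g x)
    (hg_logconvex : ∀ x ∈ Icc a b, ∀ y ∈ Icc a b, ∀ t ∈ Icc (0:ℝ) 1,
      g (t * x + (1 - t) * y) ≤ g x ^ t * g y ^ (1 - t))
    (hgab : g a = g b) :
    sugenoIntegral volume (Icc a b) (fun x => ENNReal.ofReal (g x)) ≤
      min (ENNReal.ofReal (g a)) (ENNReal.ofReal (b - a)) := by
  have hg_le : ∀ x ∈ Icc a b, g x ≤ g a := fun x hx => by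
    have ha : a ∈ Icc a b := left_mem_Icc.2 (hx.1.trans hx.2)
    have hb : b ∈ Icc a b := right_mem_Icc.2 (hx.1.trans hx.2)
    simpa [← hgab] using le_max_of_le_rpow_mul_rpow (hg_pos a ha).le (hg_pos b hb).le
      (hg_logconvex a ha b hb) hx
  refine le_min (sugenoIntegral_le_of_forall_le _ _ _ fun x hx => ofReal_le_ofReal (hg_le x hx)) ?_
  simpa [Real.volume_Icc] using
    sugenoIntegral_le_measure volume (Icc a b) fun x => ENNReal.ofReal (g x)

theorem sugenoIntegral_le_of_logConvex_eq_Icc (a b : ℝ) (hab : a < b) (g : ℝ → ℝ)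
    (hg_pos : ∀ x ∈ Icc a b, 0 < g x)
    (hg_logconvex : ∀ x ∈ Icc a b, ∀ y ∈ Icc a b, ∀ t ∈ Icc (0:ℝ) 1,
      g (t * x + (1 - t) * y) ≤ g x ^ t * g y ^ (1 - t))
    (hgab : g a = g b) :
    sugenoIntegral volume (Icc a b) (fun x => ENNReal.ofReal (g x)) ≤
      min (ENNReal.ofReal (g a)) (ENNReal.ofReal (b - a)) :=
  sugenoIntegral_le_of_logConvex_eq_Icc_general a b g hg_pos hg_logconvex hgab
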